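/- The minimal memory of the convolutional encoder equals the longest path weight: with σ_j := τ_j + l_j, the quantity L := max( max_{j: l_j ≥ 0} σ_j , max_{j: l_j < 0} τ_j ) equals max_j ( τ_j + max(0, l_j) ), which by the previous correspondence equals the weight of the longest START-to-END path in the non-commutativity graph. -/
import Mathlib


/-- `PathW E u v c` : there is a directed path from `u` to `v` in the weighted
(multi)graph with edge relation `E` (where `E u v w` means there is an edge
from `u` to `v` of weight `w`), whose total weight is `c`. -/
inductive PathW {V : Type*} (E : V → V → ℤ → Prop) : V → V → ℤ → Prop
  | nil (v : V) : PathW E v v 0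
  | cons {u v t : V} {w c : ℤ} : E u v w → PathW E v t c → PathW E u t (w + c)

/-- The minimal-memory recursion of the paper:
`τ j = max{ max(0, −l j), max_{i ∈ ST j} (τ i + l i), max_{i ∈ TS j} (τ i − l j),
max_{i ∈ TT j} τ i }`, where `ST`, `TS`, `TT` are the source-target,
target-source and target-target non-commutativity constraint sets and `l j` is
the degree of the `j`-th gate string. -/
def RecEq {N : ℕ} (l : Fin N → ℤ) (ST TS TT : Fin N → Finset (Fin N))
    (τ : Fin N → ℤ) : Prop :=
  ∀ j, τ j = (insert (max 0 (-l j))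
      ((((ST j).image fun i => τ i + l i) ∪ ((TS j).image fun i => τ i - l j)) ∪
        ((TT j).image fun i => τ i))).max' (Finset.insert_nonempty _ _)

/-- `τ` satisfies all the frame-index constraints imposed by the
non-commutativity relations. -/
def SatConstraints {N : ℕ} (l : Fin N → ℤ) (ST TS TT : Fin N → Finset (Fin N))
    (τ : Fin N → ℤ) : Prop :=
  ∀ j, max 0 (-l j) ≤ τ j ∧ (∀ i ∈ ST j, τ i + l i ≤ τ j) ∧
    (∀ i ∈ TS j, τ i - l j ≤ τ j) ∧ (∀ i ∈ TT j, τ i ≤ τ j)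

/-- The `j`-th middle vertex (gate-string vertex) of the non-commutativity graph,
whose vertex set is `START = 0 < 1 < ⋯ < N < END = Fin.last (N+1)` in `Fin (N+2)`. -/
def emb {N : ℕ} (j : Fin N) : Fin (N + 2) := j.succ.castSucc

/-- The weighted edge relation of the non-commutativity graph: an edge
`START → j` of weight `max(0, −l j)` for every gate string `j`, an edge `i → j`
of weight `l i` for `i ∈ ST j`, of weight `−l j` for `i ∈ TS j`, of weight `0`
for `i ∈ TT j`, and an edge `j → END` of weight `max(0, l j)`. -/
def ncEdge {N : ℕ} (l : Fin N → ℤ) (ST TS TT : Fin N → Finset (Fin N)) :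
    Fin (N + 2) → Fin (N + 2) → ℤ → Prop := fun x y c =>
  (∃ j : Fin N, x = 0 ∧ y = emb j ∧ c = max 0 (-l j)) ∨
  (∃ i j : Fin N, x = emb i ∧ y = emb j ∧
    ((i ∈ ST j ∧ c = l i) ∨ (i ∈ TS j ∧ c = -l j) ∨ (i ∈ TT j ∧ c = 0))) ∨
  (∃ j : Fin N, x = emb j ∧ y = Fin.last (N + 1) ∧ c = max 0 (l j))

lemma PathW_congr {V : Type*} {E : V → V → ℤ → Prop} {u v : V} {c c' : ℤ}
    (h : PathW E u v c) (hc : c = c') : PathW E u v c' := hc ▸ h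

lemma PathW.concat {V : Type*} {E : V → V → ℤ → Prop} {u v t : V} {c w : ℤ}
    (h : PathW E u v c) (he : E v t w) : PathW E u t (c + w) := by
  induction h with
  | nil v => exact PathW_congr (PathW.cons he (PathW.nil t)) (by ring)
  | cons h1 h2 ih => exact PathW_congr (PathW.cons h1 (ih he)) (by ring)

lemma PathW.le_of_potential {V : Type*} {E : V → V → ℤ → Prop} (φ : V → ℤ)
    (hE : ∀ u v w, E u v w → φ u + w ≤ φ v) {u t : V} {c : ℤ}
    (h : PathW E u t c) : φ u + c ≤ φ t := by
  induction h with
  | nil v => simp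
  | cons h1 h2 ih =>
    have := hE _ _ _ h1
    omega

/-- The minimal memory of the convolutional encoder equals the longest path
weight: with `σ j = τ j + l j`, the quantity
`L = max( max_{j : l j ≥ 0} σ j, max_{j : l j < 0} τ j )` equals
`max_j (τ j + max(0, l j))`, which equals the weight of the longest
`START`-to-`END` path in the non-commutativity graph. -/
theorem minimal_memory_eq_longest_path {N : ℕ} (l : Fin N → ℤ)
    (ST TS TT : Fin N → Finset (Fin N))
    (hST : ∀ j, ∀ i ∈ ST j, i < j) (hTS : ∀ j, ∀ i ∈ TS j, i < j)
    (hTT : ∀ j, ∀ i ∈ TT j, i < j)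
    (τ : Fin N → ℤ) (hτ : RecEq l ST TS TT τ) :
    {x | ∃ j, (0 ≤ l j ∧ x = τ j + l j) ∨ (l j < 0 ∧ x = τ j)} =
      {x | ∃ j, x = τ j + max 0 (l j)} ∧
    (∀ L, IsGreatest {x | ∃ j, x = τ j + max 0 (l j)} L →
      IsGreatest {c | PathW (ncEdge l ST TS TT) 0 (Fin.last (N + 1)) c} L) := by
  constructor
  · ext x
    simp only [Set.mem_setOf_eq]
    constructor
    · rintro ⟨j, ⟨h0, rfl⟩ | ⟨h0, rfl⟩⟩
      · exact ⟨j, by rw [max_eq_right h0]⟩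
      · exact ⟨j, by rw [max_eq_left h0.le, add_zero]⟩
    · rintro ⟨j, rfl⟩
      rcases le_or_gt 0 (l j) with h | h
      · exact ⟨j, Or.inl ⟨h, by rw [max_eq_right h]⟩⟩
      · exact ⟨j, Or.inr ⟨h, by rw [max_eq_left h.le, add_zero]⟩⟩
  · intro L hL
    obtain ⟨⟨j0, hj0⟩, hub⟩ := hL
    set E := ncEdge l ST TS TT with hE
    -- membership facts from the recursion
    have hmem : ∀ j : Fin N, τ j ∈ insert (max 0 (-l j))
        ((((ST j).image fun i => τ i + l i) ∪ ((TS j).image fun i => τ i - l j)) ∪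
          ((TT j).image fun i => τ i)) := by
      intro j
      rw [hτ j]
      exact Finset.max'_mem _ _
    have hle : ∀ j : Fin N, ∀ x ∈ insert (max 0 (-l j))
        ((((ST j).image fun i => τ i + l i) ∪ ((TS j).image fun i => τ i - l j)) ∪
          ((TT j).image fun i => τ i)), x ≤ τ j := by
      intro j x hx
      rw [hτ j]
      exact Finset.le_max' _ _ hx
    -- a path from START to emb j of weight τ j
    have key : ∀ n : ℕ, ∀ j : Fin N, j.val < n → PathW E 0 (emb j) (τ j) := by
      intro n
      induction n with
      | zero => intro j hj; omega
      | succ n ih =>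
        intro j hj
        rcases Finset.mem_insert.mp (hmem j) with h | h
        · exact PathW_congr (PathW.cons (Or.inl ⟨j, rfl, rfl, rfl⟩) (PathW.nil _))
            (by omega)
        · rcases Finset.mem_union.mp h with h | h
          · rcases Finset.mem_union.mp h with h | h
            · obtain ⟨i, hi, hih⟩ := Finset.mem_image.mp h
              have hlt := hST j i hi
              have p := ih i (by omega)
              refine PathW_congr (p.concat ?_) hih
              exact Or.inr (Or.inl ⟨i, j, rfl, rfl, Or.inl ⟨hi, rfl⟩⟩)
            · obtain ⟨i, hi, hih⟩ := Finset.mem_image.mp h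
              have hlt := hTS j i hi
              have p := ih i (by omega)
              refine PathW_congr (p.concat ?_) hih
              exact Or.inr (Or.inl ⟨i, j, rfl, rfl, Or.inr (Or.inl ⟨hi, rfl⟩)⟩)
          · obtain ⟨i, hi, hih⟩ := Finset.mem_image.mp h
            have hlt := hTT j i hi
            have p := ih i (by omega)
            exact PathW_congr (p.concat
              (Or.inr (Or.inl ⟨i, j, rfl, rfl, Or.inr (Or.inr ⟨hi, rfl⟩)⟩))) (by omega)
    constructor
    · -- L is achieved by a path
      have p := key (j0.val + 1) j0 (by omega)
      have pe : PathW E 0 (Fin.last (N+1)) (τ j0 + max 0 (l j0)) :=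
        p.concat (Or.inr (Or.inr ⟨j0, rfl, rfl, rfl⟩))
      exact PathW_congr pe hj0.symm
    · -- L is an upper bound, via the potential function
      intro c hc
      -- potential
      set φ : Fin (N + 2) → ℤ := fun x =>
        if x.val = 0 then 0 else if x.val = N + 1 then L
        else if h : x.val - 1 < N then τ ⟨x.val - 1, h⟩ else 0 with hφ
      have hφ0 : φ 0 = 0 := by simp [hφ]
      have hφlast : φ (Fin.last (N+1)) = L := by simp [hφ]
      have hφemb : ∀ j : Fin N, φ (emb j) = τ j := by
        intro j
        have hv : (emb j).val = j.val + 1 := by simp [emb]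
        have h1 : ¬ (emb j).val = 0 := by omega
        have h2 : ¬ (emb j).val = N + 1 := by have := j.isLt; omega
        have h3 : (emb j).val - 1 < N := by have := j.isLt; omega
        rw [hφ]
        simp only [h1, h2, if_false, dif_pos h3]
        congr
      have hEφ : ∀ u v w, E u v w → φ u + w ≤ φ v := by
        rintro u v w (⟨j, rfl, rfl, rfl⟩ | ⟨i, j, rfl, rfl, hcase⟩ | ⟨j, rfl, rfl, rfl⟩)
        · rw [hφ0, hφemb]
          have := hle j _ (Finset.mem_insert_self _ _)
          omega
        · rw [hφemb, hφemb]
          rcases hcase with ⟨hi, rfl⟩ | ⟨hi, rfl⟩ | ⟨hi, rfl⟩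
          · have := hle j _ (Finset.mem_insert_of_mem (Finset.mem_union_left _
              (Finset.mem_union_left _ (Finset.mem_image_of_mem _ hi))))
            omega
          · have := hle j _ (Finset.mem_insert_of_mem (Finset.mem_union_left _
              (Finset.mem_union_right _ (Finset.mem_image_of_mem _ hi))))
            omega
          · have := hle j _ (Finset.mem_insert_of_mem (Finset.mem_union_right _
              (Finset.mem_image_of_mem _ hi)))
            omega
        · rw [hφemb, hφlast]
          exact hub ⟨j, rfl⟩
      have := PathW.le_of_potential φ hEφ hc
      rw [hφ0, hφlast] at this
      omega
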